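/- Let p > 3 be a prime and let G = Φ₃₄(321)ₐ be the group of order p⁶ with presentation on generators α, α₁, α₂, β₁, β₂, γ and relations [α₁,α] = β₁, [α₂,α] = β₂, [β₂,α] = γ, [α₁,β₁] = γ, αᵖ = β₁, β₁ᵖ = γ, α₁ᵖ = β₂, α₂ᵖ = β₂ᵖ = γᵖ = 1, with every commutator of a pair of generators not listed among these relations declared trivial. Then the Bogomolov multiplier B₀(G) is trivial. -/

import Mathlib

/-!
Φ₃₄(321)ₐ: relations [α₁,α]=β₁, [α₂,α]=β₂, [β₂,α]=γ, [α₁,β₁]=γ, αᵖ=β₁, β₁ᵖ=γ,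
α₁ᵖ=β₂, α₂ᵖ=β₂ᵖ=γᵖ=1.
-/

namespace Stmt10

/-- The additive group `ℚ/ℤ`. -/
abbrev QZ : Type := ℚ ⧸ AddSubgroup.zmultiples (1 : ℚ)

/-- An inhomogeneous 2-cocycle on `G` with values in `ℚ/ℤ` (trivial `G`-action). -/
def IsTwoCocycle {G : Type} [Group G] (f : G → G → QZ) : Prop :=
  ∀ g h j : G, f h j - f (g * h) j + f g (h * j) - f g h = 0

/-- An inhomogeneous 2-coboundary on `G` with values in `ℚ/ℤ` (trivial `G`-action). -/
def IsTwoCoboundary {G : Type} [Group G] (f : G → G → QZ) : Prop :=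
  ∃ c : G → QZ, ∀ g h : G, f g h = c h - c (g * h) + c g

/-- A subgroup is bicyclic if it is abelian and generated by at most two elements
(equivalently, cyclic or a direct product of two cyclic groups). -/
def IsBicyclic {G : Type} [Group G] (A : Subgroup G) : Prop :=
  (∀ x y : A, x * y = y * x) ∧ ∃ a b : G, A = Subgroup.closure {a, b}

/-- The Bogomolov multiplier `B₀(G) ⊆ H²(G, ℚ/ℤ)` is trivial, phrased at the level of
2-cocycles: every 2-cocycle whose restriction to each bicyclic subgroup is a coboundary
(i.e. whose class restricts to zero on each bicyclic subgroup) is itself a coboundary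
(i.e. its class is zero). -/
def BogomolovMultiplierIsTrivial (G : Type) [Group G] : Prop :=
  ∀ f : G → G → QZ, IsTwoCocycle f →
    (∀ A : Subgroup G, IsBicyclic A → IsTwoCoboundary (fun a b : ↥A => f ↑a ↑b)) →
    IsTwoCoboundary f

/-- The Bogomolov multiplier `B₀(G) ⊆ H²(G, ℚ/ℤ)` is nontrivial, phrased at the level of
2-cocycles. -/
def BogomolovMultiplierIsNontrivial (G : Type) [Group G] : Prop :=
  ∃ f : G → G → QZ, IsTwoCocycle f ∧
    (∀ A : Subgroup G, IsBicyclic A → IsTwoCoboundary (fun a b : ↥A => f ↑a ↑b)) ∧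
    ¬ IsTwoCoboundary f

/-- The generators. -/
inductive Gen | a | a1 | a2 | b1 | b2 | g

open FreeGroup

/-- The commutator `[x,y] = x⁻¹y⁻¹xy`. -/
def c (x y : FreeGroup Gen) : FreeGroup Gen := x⁻¹ * y⁻¹ * x * y

/-- The defining relators. -/
def rels (p : ℕ) : Set (FreeGroup Gen) :=
  { c (of .a1) (of .a) * (of Gen.b1)⁻¹,
    c (of .a2) (of .a) * (of Gen.b2)⁻¹,
    c (of .b2) (of .a) * (of Gen.g)⁻¹,
    c (of .a1) (of .b1) * (of Gen.g)⁻¹,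
    c (of .a) (of .b1),
    c (of .a) (of .g),
    c (of .a1) (of .a2),
    c (of .a1) (of .b2),
    c (of .a1) (of .g),
    c (of .a2) (of .b1),
    c (of .a2) (of .b2),
    c (of .a2) (of .g),
    c (of .b1) (of .b2),
    c (of .b1) (of .g),
    c (of .b2) (of .g),
    (of Gen.a) ^ p * (of Gen.b1)⁻¹,
    (of Gen.b1) ^ p * (of Gen.g)⁻¹,
    (of Gen.a1) ^ p * (of Gen.b2)⁻¹,
    (of Gen.a2) ^ p,
    (of Gen.b2) ^ p,
    (of Gen.g) ^ p }

/-!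
A 2-cocycle `f` is a coboundary exactly when the central extension `ℚ/ℤ ×_f G → G` it defines
splits. If `f` is a coboundary on every bicyclic subgroup, then lifts of commuting elements of `G`
commute in the extension, so all commutation relations of the presentation hold for any lifts of
the generators. Since `ℚ/ℤ` is divisible, the lifts of `α`, `α₁`, `α₂` can be rescaled by central
elements so that `αᵖ = β₁`, `α₁ᵖ = β₂`, `α₂ᵖ = 1`, where `β₁`, `β₂`, `γ` are taken to be the
corresponding commutators of the lifts. The remaining relations `[α₁, β₁] = β₁ᵖ = γ` and
`β₂ᵖ = γᵖ = 1` then follow from these by a commutator computation that needs only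
`p ∣ p.choose 2`, so by von Dyck the lifts define a splitting.
-/

theorem dvd_choose_two_of_odd {p : ℕ} (hp : Odd p) : p ∣ p.choose 2 := by
  obtain ⟨k, rfl⟩ := hp
  exact ⟨k, by rw [Nat.choose_two_right, Nat.add_sub_cancel, mul_left_comm,
    Nat.mul_div_cancel_left _ two_pos]⟩

section GroupIdentities

variable {H : Type*} [Group H]

theorem commute_iff_inv_mul_inv_mul_mul_eq_one {x y : H} :
    Commute x y ↔ x⁻¹ * y⁻¹ * x * y = 1 := by
  rw [← Commute.inv_inv_iff, ← commutatorElement_eq_one_iff_commute, commutatorElement_def,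
    inv_inv, inv_inv]

theorem conj_pow_eq_mul_pow {a x b : H} (h : a⁻¹ * x * a = x * b) (hab : Commute a b) (k : ℕ) :
    (a ^ k)⁻¹ * x * a ^ k = x * b ^ k := by
  induction k with
  | zero => simp
  | succ k ih =>
    calc (a ^ (k + 1))⁻¹ * x * a ^ (k + 1) = a⁻¹ * ((a ^ k)⁻¹ * x * a ^ k) * a := by group
      _ = (a⁻¹ * x * a) * (a⁻¹ * b ^ k * a) := by rw [ih]; group
      _ = x * b ^ (k + 1) := by rw [h, (hab.pow_right k).inv_mul_cancel, pow_succ']; group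

theorem pow_mul_eq_mul_pow_mul_pow {x y u : H} (h : y * x = x * y * u) (huy : Commute u y)
    (n : ℕ) : y ^ n * x = x * y ^ n * u ^ n := by
  induction n with
  | zero => simp
  | succ n ih =>
    calc y ^ (n + 1) * x = y * x * y ^ n * u ^ n := by rw [pow_succ', mul_assoc, ih]; group
      _ = x * y * (u * y ^ n) * u ^ n := by rw [h]; group
      _ = x * y ^ (n + 1) * u ^ (n + 1) := by rw [(huy.pow_right n).eq]; group

theorem mul_pow_eq_mul_mul_pow_choose_two {x y u : H} (h : y * x = x * y * u) (hux : Commute u x)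
    (huy : Commute u y) (n : ℕ) : (x * y) ^ n = x ^ n * y ^ n * u ^ n.choose 2 := by
  induction n with
  | zero => simp
  | succ n ih =>
    calc (x * y) ^ (n + 1) = x ^ n * (y ^ n * x) * y * u ^ n.choose 2 := by
          rw [pow_succ, ih, mul_assoc _ (u ^ _), ((hux.pow_left _).mul_right (huy.pow_left _)).eq]
          group
      _ = x ^ (n + 1) * y ^ n * (u ^ n * y) * u ^ n.choose 2 := by
          rw [pow_mul_eq_mul_pow_mul_pow h huy]; group
      _ = x ^ (n + 1) * y ^ (n + 1) * u ^ (n + 1).choose 2 := by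
          rw [(huy.pow_left n).eq, Nat.choose_succ_succ', Nat.choose_one_right]; group

theorem pow_eq_one_of_conj_eq_mul {p : ℕ} {a x b : H} (h : a⁻¹ * x * a = x * b)
    (hxb : Commute x b) (hx : x ^ p = 1) : b ^ p = 1 := by
  have := conj_pow (a := a⁻¹) (b := x) (i := p)
  rwa [inv_inv, h, hxb.mul_pow, hx, one_mul, mul_one, inv_mul_cancel] at this

theorem phi34_derived_relations {p : ℕ} (hp : Odd p) {a a₁ b₁ b₂ g : H}
    (hb₁ : a₁⁻¹ * a⁻¹ * a₁ * a = b₁) (hg : b₂⁻¹ * a⁻¹ * b₂ * a = g)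
    (hab₁ : Commute a b₁) (ha₁ : Commute a₁ (a₁⁻¹ * b₁⁻¹ * a₁ * b₁))
    (ha : a ^ p = b₁) (ha₁p : a₁ ^ p = b₂) :
    a₁⁻¹ * b₁⁻¹ * a₁ * b₁ = g ∧ b₁ ^ p = g ∧ g ^ p = 1 := by
  have hconj : a⁻¹ * a₁ * a = a₁ * b₁ := by rw [← hb₁]; group
  have hb₁a₁ : b₁⁻¹ * a₁ * b₁ = a₁ * b₁ ^ p := by
    rw [← conj_pow_eq_mul_pow hconj hab₁ p, ha]
  set u := b₁ ^ p
  have hcomm : a₁⁻¹ * b₁⁻¹ * a₁ * b₁ = u := by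
    rw [show a₁⁻¹ * b₁⁻¹ * a₁ * b₁ = a₁⁻¹ * (b₁⁻¹ * a₁ * b₁) by group, hb₁a₁, inv_mul_cancel_left]
  rw [hcomm] at ha₁
  have hu : u ^ p = 1 := by
    have : u⁻¹ * a₁ * u = a₁ * u ^ p := conj_pow_eq_mul_pow hb₁a₁ ((Commute.refl b₁).pow_right p) p
    rwa [ha₁.symm.inv_mul_cancel, left_eq_mul] at this
  have hb₁a₁' : b₁ * a₁ = a₁ * b₁ * u⁻¹ := by
    calc b₁ * a₁ = b₁ * (a₁ * u) * u⁻¹ := by group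
      _ = a₁ * b₁ * u⁻¹ := by rw [← hb₁a₁]; group
  have hb₂ : a⁻¹ * b₂ * a = b₂ * u := by
    obtain ⟨k, hk⟩ := dvd_choose_two_of_odd hp
    calc a⁻¹ * b₂ * a = (a⁻¹ * a₁ * a) ^ p := by
          simpa [← ha₁p] using (conj_pow (a := a⁻¹) (b := a₁) (i := p)).symm
      _ = a₁ ^ p * b₁ ^ p * u⁻¹ ^ p.choose 2 :=
          hconj ▸ mul_pow_eq_mul_mul_pow_choose_two hb₁a₁' ha₁.symm.inv_left
            ((Commute.refl b₁).pow_left p).inv_left p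
      _ = b₂ * u := by rw [ha₁p, hk, pow_mul, inv_pow, hu, inv_one, one_pow, mul_one]
  have hgu : g = u := by
    rw [← hg, show b₂⁻¹ * a⁻¹ * b₂ * a = b₂⁻¹ * (a⁻¹ * b₂ * a) by group, hb₂, inv_mul_cancel_left]
  exact ⟨hgu ▸ hcomm, hgu.symm, hgu ▸ hu⟩

end GroupIdentities

section Extension

variable {G : Type} [Group G]

def IsCoboundaryOnBicyclic (f : G → G → QZ) : Prop :=
  ∀ A : Subgroup G, IsBicyclic A → IsTwoCoboundary (fun a b : A => f a b)

theorem IsTwoCocycle.apply_one_left {f : G → G → QZ} (hf : IsTwoCocycle f) (g : G) :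
    f 1 g = f 1 1 := by
  simpa [sub_eq_zero] using hf 1 1 g

theorem IsTwoCocycle.apply_one_right {f : G → G → QZ} (hf : IsTwoCocycle f) (g : G) :
    f g 1 = f 1 1 := by
  simpa [sub_eq_zero, eq_comm] using hf g 1 1

@[ext]
structure CocycleExtension (f : G → G → QZ) (hf : IsTwoCocycle f) where
  fiber : QZ
  base : G

namespace CocycleExtension

variable {f : G → G → QZ} {hf : IsTwoCocycle f}

instance : Mul (CocycleExtension f hf) :=
  ⟨fun x y => ⟨x.fiber + y.fiber + f x.base y.base, x.base * y.base⟩⟩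

instance : One (CocycleExtension f hf) := ⟨⟨-f 1 1, 1⟩⟩

instance : Inv (CocycleExtension f hf) :=
  ⟨fun x => ⟨-x.fiber - f x.base⁻¹ x.base - f 1 1, x.base⁻¹⟩⟩

@[simp] theorem fiber_mul (x y : CocycleExtension f hf) :
    (x * y).fiber = x.fiber + y.fiber + f x.base y.base := rfl

@[simp] theorem base_mul (x y : CocycleExtension f hf) : (x * y).base = x.base * y.base := rfl

@[simp] theorem fiber_one : (1 : CocycleExtension f hf).fiber = -f 1 1 := rfl

@[simp] theorem base_one : (1 : CocycleExtension f hf).base = 1 := rfl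

@[simp] theorem fiber_inv (x : CocycleExtension f hf) :
    x⁻¹.fiber = -x.fiber - f x.base⁻¹ x.base - f 1 1 := rfl

@[simp] theorem base_inv (x : CocycleExtension f hf) : x⁻¹.base = x.base⁻¹ := rfl

instance : Group (CocycleExtension f hf) where
  mul_assoc x y z := by
    ext
    · have := hf x.base y.base z.base
      simp only [fiber_mul, base_mul]
      rw [← sub_eq_zero, ← neg_eq_zero, ← this]
      abel
    · exact mul_assoc _ _ _
  one_mul x := by ext <;> simp [hf.apply_one_left]
  mul_one x := by ext <;> simp [hf.apply_one_right]
  inv_mul_cancel x := by ext <;> simp; abel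

def proj : CocycleExtension f hf →* G where
  toFun := base
  map_one' := rfl
  map_mul' _ _ := rfl

@[simp] theorem proj_apply (x : CocycleExtension f hf) : proj x = x.base := rfl

@[simp] theorem base_pow (x : CocycleExtension f hf) (n : ℕ) : (x ^ n).base = x.base ^ n :=
  map_pow proj x n

/-- The shift by `f 1 1` makes `central 0 = 1`. -/
def central (t : QZ) : CocycleExtension f hf := ⟨t - f 1 1, 1⟩

theorem central_mul (t : QZ) (x : CocycleExtension f hf) :
    central t * x = ⟨t + x.fiber, x.base⟩ := by
  ext
  · simp only [central, fiber_mul, hf.apply_one_left]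
    abel
  · simp [central]

theorem mul_central (t : QZ) (x : CocycleExtension f hf) :
    x * central t = ⟨t + x.fiber, x.base⟩ := by
  ext <;> simp [central, hf.apply_one_right]; abel

theorem commute_central (t : QZ) (x : CocycleExtension f hf) : Commute (central t) x := by
  rw [Commute, SemiconjBy, central_mul, mul_central]

theorem central_nsmul (n : ℕ) (t : QZ) :
    (central (n • t) : CocycleExtension f hf) = central t ^ n := by
  induction n with
  | zero => ext <;> simp [central]
  | succ n ih => rw [pow_succ, ← ih, central_mul]; ext <;> simp [central, succ_nsmul]; abel

theorem exists_eq_central_mul_of_base_eq {x y : CocycleExtension f hf} (h : x.base = y.base) :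
    ∃ t, x = central t * y :=
  ⟨x.fiber - y.fiber, by rw [central_mul]; ext <;> simp [h]⟩

theorem commute_of_base_eq {x y x' y' : CocycleExtension f hf} (h : Commute x y)
    (hx : x'.base = x.base) (hy : y'.base = y.base) : Commute x' y' := by
  obtain ⟨s, rfl⟩ := exists_eq_central_mul_of_base_eq hx
  obtain ⟨t, rfl⟩ := exists_eq_central_mul_of_base_eq hy
  exact (commute_central t _).symm.mul_right ((commute_central s _).mul_left h)

theorem conj_eq_of_base_eq {x x' : CocycleExtension f hf} (hx : x'.base = x.base)
    (a : CocycleExtension f hf) : x'⁻¹ * a * x' = x⁻¹ * a * x := by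
  obtain ⟨s, rfl⟩ := exists_eq_central_mul_of_base_eq hx
  calc (central s * x)⁻¹ * a * (central s * x) = x⁻¹ * ((central s)⁻¹ * a * central s) * x := by
        group
    _ = x⁻¹ * a * x := by rw [(commute_central s a).inv_mul_cancel]

theorem commutator_eq_of_base_eq {x y x' y' : CocycleExtension f hf}
    (hx : x'.base = x.base) (hy : y'.base = y.base) :
    x'⁻¹ * y'⁻¹ * x' * y' = x⁻¹ * y⁻¹ * x * y :=
  calc x'⁻¹ * y'⁻¹ * x' * y' = x⁻¹ * (y'⁻¹ * x * y') := by
        rw [conj_eq_of_base_eq hx]; simp only [mul_assoc]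
    _ = x⁻¹ * y⁻¹ * x * y := by rw [conj_eq_of_base_eq hy]; group

theorem exists_base_eq_pow_eq {n : ℕ} (hn : n ≠ 0) {x y : CocycleExtension f hf}
    (h : x.base ^ n = y.base) : ∃ x', x'.base = x.base ∧ x' ^ n = y := by
  obtain ⟨t, rfl⟩ := exists_eq_central_mul_of_base_eq (x := y) (y := x ^ n) (by simp [h])
  let _ : DivisibleBy ℚ ℕ := AddGroup.divisibleByNatOfDivisibleByInt ℚ
  refine ⟨central (DivisibleBy.div t n) * x, by simp [central], ?_⟩
  rw [(commute_central _ x).mul_pow, ← central_nsmul, DivisibleBy.div_cancel t hn]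

theorem commute_of_commute_base (hbi : IsCoboundaryOnBicyclic f) {x y : CocycleExtension f hf}
    (h : Commute x.base y.base) : Commute x y := by
  set K := Subgroup.closure {x.base, y.base}
  have hK : IsMulCommutative K := Subgroup.isMulCommutative_closure (by
    rintro a (rfl | rfl) b (rfl | rfl) <;> first | rfl | exact h | exact h.symm)
  obtain ⟨c, hc⟩ := hbi K ⟨fun a b => Std.Commutative.comm a b, x.base, y.base, rfl⟩
  let s : K → CocycleExtension f hf := fun u => ⟨-c u, u⟩
  have hs : ∀ u v, s u * s v = s (u * v) := fun u v => by
    ext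
    · simp only [fiber_mul, s, hc u v]
      abel
    · rfl
  have hx : x.base ∈ K := Subgroup.subset_closure (by simp)
  have hy : y.base ∈ K := Subgroup.subset_closure (by simp)
  refine commute_of_base_eq (x := s ⟨_, hx⟩) (y := s ⟨_, hy⟩) ?_ rfl rfl
  rw [Commute, SemiconjBy, hs, hs]
  exact congrArg s (Std.Commutative.comm _ _)

theorem isTwoCoboundary_of_section (φ : G →* CocycleExtension f hf)
    (hφ : proj.comp φ = MonoidHom.id G) : IsTwoCoboundary f := by
  have hbase (g : G) : (φ g).base = g := DFunLike.congr_fun hφ g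
  refine ⟨fun g => -(φ g).fiber, fun g h => ?_⟩
  have := congrArg fiber (map_mul φ g h)
  rw [fiber_mul, hbase, hbase] at this
  show f g h = -(φ h).fiber - -(φ (g * h)).fiber + -(φ g).fiber
  rw [this]
  abel

end CocycleExtension

end Extension

section Presentation

variable {rels : Set (FreeGroup Gen)}

@[simp] theorem mk_of (x : Gen) : PresentedGroup.mk rels (of x) = PresentedGroup.of x := rfl

theorem commute_of_c_mem {x y : Gen} (h : c (of x) (of y) ∈ rels) :
    Commute (PresentedGroup.of (rels := rels) x) (PresentedGroup.of y) :=
  commute_iff_inv_mul_inv_mul_mul_eq_one.mpr (by simpa [c] using PresentedGroup.one_of_mem h)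

theorem of_commutator_eq_of_mem {x y z : Gen} (h : c (of x) (of y) * (of z)⁻¹ ∈ rels) :
    (PresentedGroup.of (rels := rels) x)⁻¹ * (PresentedGroup.of y)⁻¹ * PresentedGroup.of x *
      PresentedGroup.of y = PresentedGroup.of z := by
  simpa [c] using PresentedGroup.mk_eq_mk_of_mul_inv_mem h

theorem of_pow_eq_of_mem {x y : Gen} {n : ℕ} (h : of x ^ n * (of y)⁻¹ ∈ rels) :
    PresentedGroup.of (rels := rels) x ^ n = PresentedGroup.of y := by
  simpa using PresentedGroup.mk_eq_mk_of_mul_inv_mem h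

theorem of_pow_eq_one_of_mem {x : Gen} {n : ℕ} (h : of x ^ n ∈ rels) :
    PresentedGroup.of (rels := rels) x ^ n = 1 := by
  simpa using PresentedGroup.one_of_mem h

end Presentation

theorem CocycleExtension.isTwoCoboundary_of_lift {α : Type} {rels : Set (FreeGroup α)}
    {f : PresentedGroup rels → PresentedGroup rels → QZ} {hf : IsTwoCocycle f}
    (F : α → CocycleExtension f hf) (hF : ∀ x, (F x).base = PresentedGroup.of x)
    (hrels : ∀ r ∈ rels, FreeGroup.lift F r = 1) : IsTwoCoboundary f :=
  isTwoCoboundary_of_section (PresentedGroup.toGroup hrels)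
    (PresentedGroup.ext fun x => by simp [hF])

section Phi34

open CocycleExtension

variable {p : ℕ} {f : PresentedGroup (rels p) → PresentedGroup (rels p) → QZ}
  {hf : IsTwoCocycle f}

theorem exists_lift_phi34 (hp : p ≠ 0) :
    ∃ F : Gen → CocycleExtension f hf, (∀ x, (F x).base = PresentedGroup.of x) ∧
      (F .a1)⁻¹ * (F .a)⁻¹ * F .a1 * F .a = F .b1 ∧
      (F .a2)⁻¹ * (F .a)⁻¹ * F .a2 * F .a = F .b2 ∧
      (F .b2)⁻¹ * (F .a)⁻¹ * F .b2 * F .a = F .g ∧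
      F .a ^ p = F .b1 ∧ F .a1 ^ p = F .b2 ∧ F .a2 ^ p = 1 := by
  let ℓ (x : Gen) : CocycleExtension f hf := ⟨0, PresentedGroup.of x⟩
  have hβ₁ := of_commutator_eq_of_mem (rels := rels p) (x := .a1) (y := .a) (z := .b1)
    (by simp [rels])
  have hβ₂ := of_commutator_eq_of_mem (rels := rels p) (x := .a2) (y := .a) (z := .b2)
    (by simp [rels])
  have hγ := of_commutator_eq_of_mem (rels := rels p) (x := .b2) (y := .a) (z := .g)
    (by simp [rels])
  obtain ⟨A, hA, hAp⟩ := exists_base_eq_pow_eq hp (x := ℓ .a)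
    (y := (ℓ .a1)⁻¹ * (ℓ .a)⁻¹ * ℓ .a1 * ℓ .a)
    (by simpa [ℓ, hβ₁] using of_pow_eq_of_mem (y := .b1) (by simp [rels]))
  obtain ⟨A₁, hA₁, hA₁p⟩ := exists_base_eq_pow_eq hp (x := ℓ .a1)
    (y := (ℓ .a2)⁻¹ * (ℓ .a)⁻¹ * ℓ .a2 * ℓ .a)
    (by simpa [ℓ, hβ₂] using of_pow_eq_of_mem (y := .b2) (by simp [rels]))
  obtain ⟨A₂, hA₂, hA₂p⟩ := exists_base_eq_pow_eq hp (x := ℓ .a2) (y := 1)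
    (by simpa [ℓ] using of_pow_eq_one_of_mem (by simp [rels]))
  rw [← commutator_eq_of_base_eq hA₁ hA] at hAp
  rw [← commutator_eq_of_base_eq hA₂ hA] at hA₁p
  refine ⟨fun
    | .a => A | .a1 => A₁ | .a2 => A₂
    | .b1 => A₁⁻¹ * A⁻¹ * A₁ * A
    | .b2 => A₂⁻¹ * A⁻¹ * A₂ * A
    | .g => (A₂⁻¹ * A⁻¹ * A₂ * A)⁻¹ * A⁻¹ * (A₂⁻¹ * A⁻¹ * A₂ * A) * A,
    ?_, rfl, rfl, rfl, hAp, hA₁p, hA₂p⟩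
  rintro (_ | _ | _ | _ | _ | _) <;> simp only [base_mul, base_inv, hA, hA₁, hA₂, ℓ, hβ₁, hβ₂, hγ]

theorem lift_eq_one_of_mem_rels (hp : Odd p) (hbi : IsCoboundaryOnBicyclic f)
    (F : Gen → CocycleExtension f hf) (hF : ∀ x, (F x).base = PresentedGroup.of x)
    (hb₁ : (F .a1)⁻¹ * (F .a)⁻¹ * F .a1 * F .a = F .b1)
    (hb₂ : (F .a2)⁻¹ * (F .a)⁻¹ * F .a2 * F .a = F .b2)
    (hg : (F .b2)⁻¹ * (F .a)⁻¹ * F .b2 * F .a = F .g)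
    (ha : F .a ^ p = F .b1) (ha₁ : F .a1 ^ p = F .b2) (ha₂ : F .a2 ^ p = 1) :
    ∀ r ∈ rels p, FreeGroup.lift F r = 1 := by
  have hcomm {x y : Gen} (h : c (of x) (of y) ∈ rels p) : Commute (F x) (F y) :=
    commute_of_commute_base hbi (by rw [hF, hF]; exact commute_of_c_mem h)
  have hb₂p := pow_eq_one_of_conj_eq_mul (a := F .a) (by rw [← hb₂]; group)
    (hcomm (x := .a2) (y := .b2) (by simp [rels])) ha₂
  have ha₁g : Commute (F .a1) ((F .a1)⁻¹ * (F .b1)⁻¹ * F .a1 * F .b1) := by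
    refine commute_of_commute_base hbi ?_
    simp only [base_mul, base_inv, hF]
    rw [of_commutator_eq_of_mem (x := .a1) (y := .b1) (z := .g) (by simp [rels])]
    exact commute_of_c_mem (by simp [rels])
  obtain ⟨hg₁, hb₁p, hgp⟩ := phi34_derived_relations hp hb₁ hg
    (hcomm (x := .a) (y := .b1) (by simp [rels])) ha₁g ha ha₁
  intro r hr
  have hr' := hr
  simp only [rels, Set.mem_insert_iff, Set.mem_singleton_iff] at hr'
  rcases hr' with rfl | rfl | rfl | rfl | rfl | rfl | rfl | rfl | rfl | rfl | rfl | rfl | rfl |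
    rfl | rfl | rfl | rfl | rfl | rfl | rfl | rfl
  all_goals first
    | simpa [c] using commute_iff_inv_mul_inv_mul_mul_eq_one.mp (hcomm hr)
    | simp [c, hb₁, hb₂, hg, hg₁, ha, ha₁, ha₂, hb₁p, hb₂p, hgp]

end Phi34

theorem bogomolov_trivial_Phi34_general (p : ℕ) (hp : p.Prime) (h3 : 3 < p) :
    BogomolovMultiplierIsTrivial (PresentedGroup (rels p)) := by
  intro f hf hbi
  obtain ⟨F, hF, hb₁, hb₂, hg, ha, ha₁, ha₂⟩ := exists_lift_phi34 (hf := hf) hp.ne_zero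
  exact CocycleExtension.isTwoCoboundary_of_lift F hF
    (lift_eq_one_of_mem_rels (hp.odd_of_ne_two (by omega)) hbi F hF hb₁ hb₂ hg ha ha₁ ha₂)

theorem bogomolov_trivial_Phi34 (p : ℕ) (hp : p.Prime) (h3 : 3 < p)
    (hcard : Nat.card (PresentedGroup (rels p)) = p ^ 6) :
    BogomolovMultiplierIsTrivial (PresentedGroup (rels p)) :=
  bogomolov_trivial_Phi34_general p hp h3

end Stmt10
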